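/- 2D generalized Lax–Friedrichs splitting property: let Q ≥ 1, let ω₁,…,ω_Q > 0 with Σ_i ω_i = 1, let Δx, Δy > 0, and let Ū^i, Ũ^i, Û^i, Ǔ^i ∈ 𝒢 (i = 1,…,Q) with assigned positive pressures satisfy the 2D discrete divergence-free condition (Σ_i ω_i(B̄₁^i − B̃₁^i))/Δx + (Σ_i ω_i(B̂₂^i − B̌₂^i))/Δy = 0. If α₁ > max_{1≤i≤Q} α₁(Ū^i, Ũ^i) and α₂ > max_{1≤i≤Q} α₂(Û^i, Ǔ^i), then the state Ū := [ 1/(2(α₁/Δx + α₂/Δy)) ] · Σ_{i=1}^{Q} ω_i [ (α₁/Δx)( Ū^i − F₁(Ū^i)/α₁ + Ũ^i + F₁(Ũ^i)/α₁ ) + (α₂/Δy)( Û^i − F₂(Û^i)/α₂ + Ǔ^i + F₂(Ǔ^i)/α₂ ) ] belongs to 𝒢. -/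

import Mathlib

open scoped BigOperators

noncomputable section

/-- Euclidean dot product on ℝ³. -/
def dot3 (a b : Fin 3 → ℝ) : ℝ := ∑ j, a j * b j

/-- Squared Euclidean norm on ℝ³. -/
def normSq3 (a : Fin 3 → ℝ) : ℝ := ∑ j, (a j) ^ 2

/-- Momentum components of a state `U = (ρ, m, B, E) ∈ ℝ⁸`. -/
def mC (U : Fin 8 → ℝ) : Fin 3 → ℝ := ![U 1, U 2, U 3]

/-- Magnetic-field components of a state. -/
def BC (U : Fin 8 → ℝ) : Fin 3 → ℝ := ![U 4, U 5, U 6]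

/-- Velocity components `v = m / ρ`. -/
def velC (U : Fin 8 → ℝ) : Fin 3 → ℝ := fun j => mC U j / U 0

/-- Internal energy `𝓔(U) = E − (|m|²/ρ + |B|²)/2`. -/
def intE (U : Fin 8 → ℝ) : ℝ := U 7 - (normSq3 (mC U) / U 0 + normSq3 (BC U)) / 2

/-- The admissible set `𝒢`. -/
def admisSet : Set (Fin 8 → ℝ) := {U | 0 < U 0 ∧ 0 < intE U}

/-- The vector `n* = (|v*|²/2, −v*, −B*, 1) ∈ ℝ⁸`. -/
def nstar (vs Bs : Fin 3 → ℝ) : Fin 8 → ℝ :=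
  ![normSq3 vs / 2, -vs 0, -vs 1, -vs 2, -Bs 0, -Bs 1, -Bs 2, 1]

/-- Euclidean dot product on ℝ⁸. -/
def dot8 (U V : Fin 8 → ℝ) : ℝ := ∑ k, U k * V k

/-- Flux `F_i(U)` of a state `U` with assigned pressure `p`, in direction `i`. -/
def flux (p : ℝ) (i : Fin 3) (U : Fin 8 → ℝ) : Fin 8 → ℝ :=
  let ρ := U 0
  let v := velC U
  let B := BC U
  let ptot := p + normSq3 B / 2
  ![ρ * v i,
    ρ * v i * v 0 - B i * B 0 + (if i = 0 then ptot else 0),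
    ρ * v i * v 1 - B i * B 1 + (if i = 1 then ptot else 0),
    ρ * v i * v 2 - B i * B 2 + (if i = 2 then ptot else 0),
    v i * B 0 - B i * v 0,
    v i * B 1 - B i * v 1,
    v i * B 2 - B i * v 2,
    v i * (U 7 + ptot) - B i * dot3 v B]

/-- The fast-speed-type quantity built from a sound-speed-like value `cs`:
`(1/√2)·√( cs² + |B|²/ρ + √((cs² + |B|²/ρ)² − 4cs²B_i²/ρ) )`. -/
def fastLike (cs : ℝ) (U : Fin 8 → ℝ) (i : Fin 3) : ℝ :=
  (1 / Real.sqrt 2) *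
    Real.sqrt (cs ^ 2 + normSq3 (BC U) / U 0 +
      Real.sqrt ((cs ^ 2 + normSq3 (BC U) / U 0) ^ 2 - 4 * cs ^ 2 * (BC U i) ^ 2 / U 0))

/-- `𝓢_s = p/(ρ√(2e))` for a state `U` with pressure `p`. -/
def sSound (p : ℝ) (U : Fin 8 → ℝ) : ℝ :=
  p / (U 0 * Real.sqrt (2 * (intE U / U 0)))

/-- `𝓢_i` for a state `U` with pressure `p`. -/
def sFast (p : ℝ) (U : Fin 8 → ℝ) (i : Fin 3) : ℝ := fastLike (sSound p U) U i

/-- `f(U, Ũ; σ) = (|B̃ − B|/√2)·√(σ²/ρ + (1−σ)²/ρ̃)`. -/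
def fCoup (U Ut : Fin 8 → ℝ) (σ : ℝ) : ℝ :=
  (Real.sqrt (normSq3 (fun j => BC Ut j - BC U j)) / Real.sqrt 2) *
    Real.sqrt (σ ^ 2 / U 0 + (1 - σ) ^ 2 / Ut 0)

/-- `α_i(U, Ũ; σ)` for states `U, Ũ` with pressures `p, p̃`. -/
def alphaSig (i : Fin 3) (U Ut : Fin 8 → ℝ) (p pt : ℝ) (σ : ℝ) : ℝ :=
  max (max (|velC U i| + sFast p U i) (|velC Ut i| + sFast pt Ut i))
      (|σ * velC U i + (1 - σ) * velC Ut i| + max (sFast p U i) (sFast pt Ut i))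
  + fCoup U Ut σ

/-- `α_i(U, Ũ) = inf_{σ ∈ ℝ} α_i(U, Ũ; σ)`. -/
def alphaInf (i : Fin 3) (U Ut : Fin 8 → ℝ) (p pt : ℝ) : ℝ :=
  ⨅ σ : ℝ, alphaSig i U Ut p pt σ

/-- Ideal-EOS pressure `p = (γ−1)ρe = (γ−1)𝓔(U)`. -/
def idealP (γ : ℝ) (U : Fin 8 → ℝ) : ℝ := (γ - 1) * intE U

/-- Ideal-EOS sound speed `𝓒_s = √(γp/ρ)`. -/
def cSound (γ : ℝ) (U : Fin 8 → ℝ) : ℝ := Real.sqrt (γ * idealP γ U / U 0)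

/-- Ideal-EOS fast speed `𝓒_i`. -/
def cFast (γ : ℝ) (U : Fin 8 → ℝ) (i : Fin 3) : ℝ := fastLike (cSound γ U) U i

/-- Ideal-EOS spectral radius `𝓡_i(U) = |v_i| + 𝓒_i`. -/
def specR (γ : ℝ) (i : Fin 3) (U : Fin 8 → ℝ) : ℝ := |velC U i| + cFast γ U i

/-- Pressure of a state under a general EOS function `P(ρ, e)`. -/
def presOf (P : ℝ → ℝ → ℝ) (U : Fin 8 → ℝ) : ℝ := P (U 0) (intE U / U 0)

/-- Lax–Friedrichs numerical flux with viscosity `α`, under EOS function `P`. -/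
def lfFlux (P : ℝ → ℝ → ℝ) (α : ℝ) (i : Fin 3) (Um Up : Fin 8 → ℝ) : Fin 8 → ℝ :=
  (1 / 2 : ℝ) • (flux (presOf P Um) i Um + flux (presOf P Up) i Up - α • (Up - Um))

/-- Lax–Friedrichs numerical flux with viscosity `α`, ideal EOS of index `γ`. -/
def lfFluxIdeal (γ : ℝ) (α : ℝ) (i : Fin 3) (Um Up : Fin 8 → ℝ) : Fin 8 → ℝ :=
  (1 / 2 : ℝ) • (flux (idealP γ Um) i Um + flux (idealP γ Up) i Up - α • (Up - Um))

/-!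
With `n* = (|v*|²/2, -v*, -B*, 1)`, a state with positive density lies in `𝒢` iff
`U · n* + |B*|²/2 > 0` for all `v*, B*`, so it suffices to control these linear functionals.
For one Lax–Friedrichs pair `U - F_i(U)/α + Ũ + F_i(Ũ)/α` they are positive up to the term
`(B̃_i - B_i)(v*·B*)/α`. Writing `u = v - v*`, `b = B - B*`, the pressure and magnetic part of
`F_i(U)·n*` is bounded by `𝓢_i (𝓔 + ρ|u|²/2 + |b|²/2)`, because `𝓢_i²` is the larger root of
`ρX² - (ρ𝓢_s² + |B|²)X + 𝓢_s²B_i² = 0`; the jump of `B` across the pair is paid for by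
`f(U, Ũ; σ)`. In the weighted sum of the pairs in both directions the `v*·B*` terms add up to
the left-hand side of the discrete divergence-free condition, hence vanish.
-/

theorem normSq3_nonneg (a : Fin 3 → ℝ) : 0 ≤ normSq3 a :=
  Finset.sum_nonneg fun _ _ => sq_nonneg _

theorem sq_le_normSq3 (a : Fin 3 → ℝ) (i : Fin 3) : a i ^ 2 ≤ normSq3 a :=
  Finset.single_le_sum (f := fun j => a j ^ 2) (fun _ _ => sq_nonneg _) (Finset.mem_univ i)

theorem dot3_sq_le (a b : Fin 3 → ℝ) : dot3 a b ^ 2 ≤ normSq3 a * normSq3 b :=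
  Finset.sum_mul_sq_le_sq_mul_sq _ a b

theorem sq_dot3_sub_le (a b : Fin 3 → ℝ) (i : Fin 3) :
    (dot3 a b - a i * b i) ^ 2 ≤ (normSq3 a - a i ^ 2) * (normSq3 b - b i ^ 2) := by
  have h := Finset.sum_mul_sq_le_sq_mul_sq (Finset.univ.erase i) a b
  rwa [Finset.sum_erase_eq_sub (Finset.mem_univ i), Finset.sum_erase_eq_sub (Finset.mem_univ i),
    Finset.sum_erase_eq_sub (Finset.mem_univ i)] at h

theorem sq_normSq3_sub_le (b c : Fin 3 → ℝ) :
    (normSq3 c - normSq3 b) ^ 2 ≤ 2 * normSq3 (c - b) * (normSq3 b + normSq3 c) := by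
  have hcs := dot3_sq_le (c - b) (c + b)
  have hdiff : dot3 (c - b) (c + b) = normSq3 c - normSq3 b := by
    simp only [dot3, normSq3, Fin.sum_univ_three, Pi.sub_apply, Pi.add_apply]; ring
  have hsum : normSq3 (c + b) ≤ 2 * (normSq3 b + normSq3 c) := by
    simp only [normSq3, Fin.sum_univ_three, Pi.add_apply]
    nlinarith [sq_nonneg (c 0 - b 0), sq_nonneg (c 1 - b 1), sq_nonneg (c 2 - b 2)]
  rw [hdiff] at hcs
  nlinarith [normSq3_nonneg (c - b)]

theorem sq_mul_add_mul_le {ρ ρt : ℝ} (hρ : 0 < ρ) (hρt : 0 < ρt) (a b x y : ℝ) :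
    (a * x + b * y) ^ 2 ≤ (a ^ 2 / ρ + b ^ 2 / ρt) * (ρ * x ^ 2 + ρt * y ^ 2) := by
  rw [div_add_div _ _ hρ.ne' hρt.ne', div_mul_eq_mul_div, le_div_iff₀ (by positivity)]
  nlinarith [sq_nonneg (a * ρt * y - b * ρ * x)]

def fluxRemainder (p : ℝ) (i : Fin 3) (B u b : Fin 3 → ℝ) : ℝ :=
  p * u i + u i * dot3 B b - B i * dot3 u b

theorem sq_fluxRemainder_le (p : ℝ) (i : Fin 3) (B u b : Fin 3 → ℝ) :
    fluxRemainder p i B u b ^ 2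
      ≤ normSq3 u * ((p + (dot3 B b - B i * b i)) ^ 2 + B i ^ 2 * (normSq3 b - b i ^ 2)) := by
  set w : Fin 3 → ℝ := fun j => (if j = i then p + dot3 B b else 0) - B i * b j
  have hw : fluxRemainder p i B u b = dot3 u w := by
    fin_cases i <;> simp [fluxRemainder, w, dot3, Fin.sum_univ_three] <;> ring
  have hw2 : normSq3 w = (p + (dot3 B b - B i * b i)) ^ 2 + B i ^ 2 * (normSq3 b - b i ^ 2) := by
    fin_cases i <;> simp [w, normSq3, dot3, Fin.sum_univ_three] <;> ring
  rw [hw, ← hw2]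
  exact dot3_sq_le u w

theorem fastRoot_bounds {ρ Z n c X : ℝ} (hρ : 0 < ρ) (hZ : 0 ≤ Z) (hcn : c ≤ n)
    (hX : X = (Z + n / ρ + √((Z + n / ρ) ^ 2 - 4 * Z * c / ρ)) / 2) :
    Z ≤ X ∧ n ≤ ρ * X ∧ (X - Z) * (ρ * X - n) = Z * (n - c) := by
  have hdisc : (Z + n / ρ) ^ 2 - 4 * Z * c / ρ = (Z - n / ρ) ^ 2 + 4 * Z * (n - c) / ρ := by
    field_simp; ring
  have hdisc_nonneg : 0 ≤ 4 * Z * (n - c) / ρ := by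
    have := sub_nonneg.2 hcn; positivity
  have hroot := Real.sq_sqrt (hdisc ▸ add_nonneg (sq_nonneg (Z - n / ρ)) hdisc_nonneg)
  have habs : |Z - n / ρ| ≤ √((Z + n / ρ) ^ 2 - 4 * Z * c / ρ) :=
    Real.abs_le_sqrt (by rw [hdisc]; linarith)
  obtain ⟨h1, h2⟩ := abs_le.1 habs
  refine ⟨by linarith, ?_, ?_⟩
  · have : n / ρ ≤ X := by linarith
    rwa [div_le_iff₀' hρ] at this
  · generalize √((Z + n / ρ) ^ 2 - 4 * Z * c / ρ) = s at hX hroot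
    subst hX
    linear_combination (norm := (field_simp; ring)) (ρ / 4) * hroot

theorem quadratic_le_of_fastRoot {ρ Z n c X x β p E : ℝ} (hZ : 0 < Z) (hZX : Z ≤ X)
    (hnX : n ≤ ρ * X) (hroot : (X - Z) * (ρ * X - n) = Z * (n - c)) (hx : 0 ≤ x)
    (hβ : β ^ 2 ≤ (n - c) * x) (hp : Z * (2 * ρ * E) = p ^ 2) :
    (p + β) ^ 2 + c * x ≤ ρ * X * (2 * E + x) := by
  -- times `Z`, the claim reduces to this quadratic form in `(p, β)` being nonnegative, and `hroot`
  -- is exactly its discriminant condition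
  have hQ : 0 ≤ (X - Z) * p ^ 2 - 2 * Z * p * β + Z * (ρ * X - n) * x := by
    rcases (sub_nonneg.2 hZX).lt_or_eq with hA | hA
    · refine nonneg_of_mul_nonneg_right ?_ hA
      have hsq : (X - Z) * ((X - Z) * p ^ 2 - 2 * Z * p * β + Z * (ρ * X - n) * x)
          = ((X - Z) * p - Z * β) ^ 2 + Z ^ 2 * ((n - c) * x - β ^ 2) := by
        linear_combination (Z * x) * hroot
      rw [hsq]
      have := sub_nonneg.2 hβ
      positivity
    · have hβ0 : β = 0 := by
        have : (n - c) * x = 0 := by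
          have := hroot; rw [← hA, zero_mul] at this
          rw [(mul_eq_zero.1 this.symm).resolve_left hZ.ne', zero_mul]
        exact pow_eq_zero_iff two_ne_zero |>.1 (le_antisymm (this ▸ hβ) (sq_nonneg β))
      rw [← hA, hβ0]
      have := mul_nonneg (mul_nonneg hZ.le (sub_nonneg.2 hnX)) hx
      linarith
  refine le_of_mul_le_mul_left ?_ hZ
  nlinarith [mul_le_mul_of_nonneg_left hβ hZ.le]

def kinEnergy (U : Fin 8 → ℝ) (vs : Fin 3 → ℝ) : ℝ := intE U + U 0 * normSq3 (velC U - vs) / 2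

def magEnergy (U : Fin 8 → ℝ) (Bs : Fin 3 → ℝ) : ℝ := normSq3 (BC U - Bs) / 2

theorem kinEnergy_pos {U : Fin 8 → ℝ} (hU : U ∈ admisSet) (vs : Fin 3 → ℝ) :
    0 < kinEnergy U vs := by
  have := mul_nonneg hU.1.le (normSq3_nonneg (velC U - vs))
  unfold kinEnergy; linarith [hU.2]

theorem magEnergy_nonneg (U : Fin 8 → ℝ) (Bs : Fin 3 → ℝ) : 0 ≤ magEnergy U Bs := by
  unfold magEnergy; linarith [normSq3_nonneg (BC U - Bs)]

theorem dot8_nstar {U : Fin 8 → ℝ} (hρ : U 0 ≠ 0) (vs Bs : Fin 3 → ℝ) :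
    dot8 U (nstar vs Bs) = kinEnergy U vs + magEnergy U Bs - normSq3 Bs / 2 := by
  simp [dot8, nstar, kinEnergy, magEnergy, normSq3, intE, velC, mC, BC, Fin.sum_univ_succ]
  field_simp
  ring

theorem dot8_flux_nstar (p : ℝ) (i : Fin 3) {U : Fin 8 → ℝ} (hρ : U 0 ≠ 0) (vs Bs : Fin 3 → ℝ) :
    dot8 (flux p i U) (nstar vs Bs)
      = velC U i * (kinEnergy U vs + magEnergy U Bs)
        + fluxRemainder p i (BC U) (velC U - vs) (BC U - Bs)
        - (velC U - vs) i * magEnergy U Bs - vs i * normSq3 Bs / 2 + BC U i * dot3 vs Bs := by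
  fin_cases i <;>
  · simp [dot8, nstar, flux, fluxRemainder, kinEnergy, magEnergy, normSq3, dot3, intE, velC, mC,
      BC, Fin.sum_univ_succ]
    field_simp
    ring

theorem sq_sSound_mul {p : ℝ} {U : Fin 8 → ℝ} (hU : U ∈ admisSet) :
    sSound p U ^ 2 * (2 * U 0 * intE U) = p ^ 2 := by
  obtain ⟨hρ, hE⟩ := hU
  rw [sSound, div_pow, mul_pow, Real.sq_sqrt (by positivity)]
  field_simp

theorem sq_fastLike (cs : ℝ) {U : Fin 8 → ℝ} (hρ : 0 < U 0) (i : Fin 3) :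
    fastLike cs U i ^ 2 = (cs ^ 2 + normSq3 (BC U) / U 0 +
      √((cs ^ 2 + normSq3 (BC U) / U 0) ^ 2 - 4 * cs ^ 2 * BC U i ^ 2 / U 0)) / 2 := by
  have := normSq3_nonneg (BC U)
  rw [fastLike, mul_pow, Real.sq_sqrt (by positivity), div_pow, Real.sq_sqrt zero_le_two]
  ring

theorem sFast_nonneg (p : ℝ) (U : Fin 8 → ℝ) (i : Fin 3) : 0 ≤ sFast p U i := by
  unfold sFast fastLike; positivity

theorem abs_fluxRemainder_le {p : ℝ} {U : Fin 8 → ℝ} (hU : U ∈ admisSet) (hp : 0 < p) (i : Fin 3)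
    (vs Bs : Fin 3 → ℝ) :
    |fluxRemainder p i (BC U) (velC U - vs) (BC U - Bs)|
      ≤ sFast p U i * (kinEnergy U vs + magEnergy U Bs) := by
  have hρ := hU.1
  set u := velC U - vs
  set b := BC U - Bs
  have hZ : 0 < sSound p U ^ 2 := by
    have := sq_sSound_mul (p := p) hU
    nlinarith [sq_nonneg (sSound p U), mul_pos hρ hU.2, pow_pos hp 2]
  obtain ⟨hZX, hnX, hroot⟩ := fastRoot_bounds (X := sFast p U i ^ 2) hρ hZ.le
    (sq_le_normSq3 (BC U) i) (sq_fastLike (sSound p U) hρ i)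
  have hcoef := quadratic_le_of_fastRoot (p := p) (E := intE U) hZ hZX hnX hroot
    (sub_nonneg.2 (sq_le_normSq3 b i)) (sq_dot3_sub_le (BC U) b i)
    (by linear_combination sq_sSound_mul (p := p) hU)
  have hsq : fluxRemainder p i (BC U) u b ^ 2
      ≤ (sFast p U i * (kinEnergy U vs + magEnergy U Bs)) ^ 2 :=
    calc fluxRemainder p i (BC U) u b ^ 2
        ≤ normSq3 u * ((p + (dot3 (BC U) b - BC U i * b i)) ^ 2
            + BC U i ^ 2 * (normSq3 b - b i ^ 2)) := sq_fluxRemainder_le p i (BC U) u b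
      _ ≤ normSq3 u * (U 0 * sFast p U i ^ 2 * (2 * intE U + normSq3 b)) := by
          gcongr
          · exact normSq3_nonneg u
          · exact hcoef.trans (by gcongr; linarith [sq_nonneg (b i)])
      _ ≤ (sFast p U i * (kinEnergy U vs + magEnergy U Bs)) ^ 2 := by
          rw [mul_pow, kinEnergy, magEnergy]
          nlinarith [sq_nonneg (U 0 * normSq3 u / 2 - intE U - normSq3 b / 2),
            sq_nonneg (sFast p U i)]
  exact abs_le_of_sq_le_sq hsq (mul_nonneg (sFast_nonneg p U i)
    (add_nonneg (kinEnergy_pos hU vs).le (magEnergy_nonneg U Bs)))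

theorem fCoup_nonneg (U Ut : Fin 8 → ℝ) (σ : ℝ) : 0 ≤ fCoup U Ut σ := by
  unfold fCoup; positivity

theorem sq_fCoup {U Ut : Fin 8 → ℝ} (hρ : 0 < U 0) (hρt : 0 < Ut 0) (σ : ℝ) :
    fCoup U Ut σ ^ 2 = normSq3 (BC Ut - BC U) * (σ ^ 2 / U 0 + (1 - σ) ^ 2 / Ut 0) / 2 := by
  rw [fCoup, mul_pow, div_pow, Real.sq_sqrt (normSq3_nonneg _), Real.sq_sqrt zero_le_two,
    Real.sq_sqrt (by positivity), Pi.sub_def]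
  ring

theorem abs_coupling_le {U Ut : Fin 8 → ℝ} (hU : U ∈ admisSet) (hUt : Ut ∈ admisSet)
    (σ : ℝ) (i : Fin 3) (vs Bs : Fin 3 → ℝ) :
    |(σ * (velC U - vs) i + (1 - σ) * (velC Ut - vs) i) * (magEnergy Ut Bs - magEnergy U Bs)|
      ≤ fCoup U Ut σ * (kinEnergy U vs + kinEnergy Ut vs + magEnergy U Bs + magEnergy Ut Bs) := by
  obtain ⟨hρ, hE⟩ := hU
  obtain ⟨hρt, hEt⟩ := hUt
  set u := velC U - vs
  set ut := velC Ut - vs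
  set H := U 0 * u i ^ 2 + Ut 0 * ut i ^ 2
  set M := magEnergy U Bs + magEnergy Ut Bs
  have hM : (magEnergy Ut Bs - magEnergy U Bs) ^ 2 ≤ normSq3 (BC Ut - BC U) * M := by
    have := sq_normSq3_sub_le (BC U - Bs) (BC Ut - Bs)
    rw [sub_sub_sub_cancel_right] at this
    unfold M magEnergy
    linarith
  have hH0 : 0 ≤ H := by positivity
  have hsq : ((σ * u i + (1 - σ) * ut i) * (magEnergy Ut Bs - magEnergy U Bs)) ^ 2
      ≤ (fCoup U Ut σ * (H / 2 + M)) ^ 2 := by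
    calc _ ≤ ((σ ^ 2 / U 0 + (1 - σ) ^ 2 / Ut 0) * H) * (normSq3 (BC Ut - BC U) * M) := by
          rw [mul_pow]
          exact mul_le_mul (sq_mul_add_mul_le hρ hρt σ (1 - σ) (u i) (ut i)) hM (sq_nonneg _)
            (mul_nonneg (by positivity) hH0)
      _ = fCoup U Ut σ ^ 2 * (2 * H * M) := by rw [sq_fCoup hρ hρt]; ring
      _ ≤ fCoup U Ut σ ^ 2 * (H / 2 + M) ^ 2 := by gcongr; nlinarith [sq_nonneg (H / 2 - M)]
      _ = (fCoup U Ut σ * (H / 2 + M)) ^ 2 := by ring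
  have hH : H / 2 ≤ kinEnergy U vs + kinEnergy Ut vs := by
    unfold H kinEnergy
    nlinarith [mul_le_mul_of_nonneg_left (sq_le_normSq3 u i) hρ.le,
      mul_le_mul_of_nonneg_left (sq_le_normSq3 ut i) hρt.le]
  have hM0 : 0 ≤ M := add_nonneg (magEnergy_nonneg U Bs) (magEnergy_nonneg Ut Bs)
  have hf := fCoup_nonneg U Ut σ
  calc _ ≤ fCoup U Ut σ * (H / 2 + M) := abs_le_of_sq_le_sq hsq (by positivity)
    _ ≤ _ := by rw [add_assoc _ (magEnergy U Bs)]; gcongr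

theorem alphaSig_lt_iff {i : Fin 3} {U Ut : Fin 8 → ℝ} {p pt σ α : ℝ} :
    alphaSig i U Ut p pt σ < α ↔
      |velC U i| + sFast p U i + fCoup U Ut σ < α ∧
      |velC Ut i| + sFast pt Ut i + fCoup U Ut σ < α ∧
      |σ * velC U i + (1 - σ) * velC Ut i| + max (sFast p U i) (sFast pt Ut i)
        + fCoup U Ut σ < α := by
  simp only [alphaSig, ← lt_sub_iff_add_lt, max_lt_iff, and_assoc]

theorem pos_of_alphaSig_lt {i : Fin 3} {U Ut : Fin 8 → ℝ} {p pt σ α : ℝ}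
    (h : alphaSig i U Ut p pt σ < α) : 0 < α := by
  linarith [(alphaSig_lt_iff.1 h).1, abs_nonneg (velC U i), sFast_nonneg p U i,
    fCoup_nonneg U Ut σ]

/-- `m` counts copies of `|B*|²/2` and `d` is a defect multiplying `v*·B*`; the case `m = 1`,
`d = 0` is `𝒢` (`mem_admisSet_iff`). -/
def LinAdmissible (m d : ℝ) (U : Fin 8 → ℝ) : Prop :=
  0 < U 0 ∧ ∀ vs Bs : Fin 3 → ℝ, d * dot3 vs Bs < dot8 U (nstar vs Bs) + m * normSq3 Bs / 2

theorem mem_admisSet_iff {U : Fin 8 → ℝ} : U ∈ admisSet ↔ LinAdmissible 1 0 U := by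
  refine ⟨fun hU => ⟨hU.1, fun vs Bs => ?_⟩, fun ⟨hρ, h⟩ => ⟨hρ, ?_⟩⟩
  · rw [dot8_nstar hU.1.ne']
    linarith [kinEnergy_pos hU vs, magEnergy_nonneg U Bs]
  · simpa [dot8_nstar hρ.ne', kinEnergy, magEnergy, normSq3] using h (velC U) (BC U)

theorem LinAdmissible.add {m m' d d' : ℝ} {U U' : Fin 8 → ℝ} (h : LinAdmissible m d U)
    (h' : LinAdmissible m' d' U') : LinAdmissible (m + m') (d + d') (U + U') := by
  refine ⟨add_pos h.1 h'.1, fun vs Bs => ?_⟩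
  have e : dot8 (U + U') (nstar vs Bs) = dot8 U (nstar vs Bs) + dot8 U' (nstar vs Bs) :=
    add_dotProduct U U' _
  rw [e]
  linarith [h.2 vs Bs, h'.2 vs Bs]

theorem LinAdmissible.smul {m d t : ℝ} {U : Fin 8 → ℝ} (h : LinAdmissible m d U) (ht : 0 < t) :
    LinAdmissible (t * m) (t * d) (t • U) := by
  refine ⟨mul_pos ht h.1, fun vs Bs => ?_⟩
  have e : dot8 (t • U) (nstar vs Bs) = t * dot8 U (nstar vs Bs) := smul_dotProduct t U _
  rw [e]
  nlinarith [h.2 vs Bs]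

theorem LinAdmissible.sum {ι : Type*} {s : Finset ι} (hs : s.Nonempty) {m d : ι → ℝ}
    {U : ι → Fin 8 → ℝ} (h : ∀ j ∈ s, LinAdmissible (m j) (d j) (U j)) :
    LinAdmissible (∑ j ∈ s, m j) (∑ j ∈ s, d j) (∑ j ∈ s, U j) := by
  induction hs using Finset.Nonempty.cons_induction with
  | singleton a => simpa using h a (Finset.mem_singleton_self a)
  | cons a s ha hs ih =>
    simp only [Finset.sum_cons]
    exact (h a (Finset.mem_cons_self a s)).add (ih fun j hj => h j (Finset.mem_cons_of_mem hj))

def lfPair (α : ℝ) (i : Fin 3) (U Ut : Fin 8 → ℝ) (p pt : ℝ) : Fin 8 → ℝ :=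
  U - α⁻¹ • flux p i U + Ut + α⁻¹ • flux pt i Ut

theorem lfPair_zero_pos {α : ℝ} (hα : 0 < α) (i : Fin 3) {U Ut : Fin 8 → ℝ} (hU : U ∈ admisSet)
    (hUt : Ut ∈ admisSet) (hv : |velC U i| < α) (hvt : |velC Ut i| < α) (p pt : ℝ) :
    0 < lfPair α i U Ut p pt 0 := by
  have e : lfPair α i U Ut p pt 0 = (U 0 * (α - velC U i) + Ut 0 * (α + velC Ut i)) / α := by
    simp only [lfPair, Pi.add_apply, Pi.sub_apply, Pi.smul_apply, smul_eq_mul]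
    change _ - α⁻¹ * (U 0 * velC U i) + _ + α⁻¹ * (Ut 0 * velC Ut i) = _
    field_simp
    ring
  rw [e]
  exact div_pos (add_pos (mul_pos hU.1 (by linarith [le_abs_self (velC U i)]))
    (mul_pos hUt.1 (by linarith [neg_abs_le (velC Ut i)]))) hα

theorem lfPair_energy_eq {α : ℝ} (hα : α ≠ 0) (i : Fin 3) {U Ut : Fin 8 → ℝ} (hρ : U 0 ≠ 0)
    (hρt : Ut 0 ≠ 0) (p pt : ℝ) (vs Bs : Fin 3 → ℝ) :
    α * (dot8 (lfPair α i U Ut p pt) (nstar vs Bs) + normSq3 Bs) - (BC Ut i - BC U i) * dot3 vs Bs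
      = (α - velC U i) * kinEnergy U vs + (α + velC Ut i) * kinEnergy Ut vs
        + (α - vs i) * magEnergy U Bs + (α + vs i) * magEnergy Ut Bs
        - fluxRemainder p i (BC U) (velC U - vs) (BC U - Bs)
        + fluxRemainder pt i (BC Ut) (velC Ut - vs) (BC Ut - Bs) := by
  have hlin : dot8 (lfPair α i U Ut p pt) (nstar vs Bs) = dot8 U (nstar vs Bs)
      - α⁻¹ * dot8 (flux p i U) (nstar vs Bs) + dot8 Ut (nstar vs Bs)
      + α⁻¹ * dot8 (flux pt i Ut) (nstar vs Bs) := by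
    simp only [dot8, lfPair, ← dotProduct.eq_1, add_dotProduct, sub_dotProduct, smul_dotProduct,
      smul_eq_mul]
  rw [hlin, dot8_nstar hρ, dot8_nstar hρt, dot8_flux_nstar p i hρ, dot8_flux_nstar pt i hρt]
  simp only [Pi.sub_apply]
  field_simp
  ring

theorem linAdmissible_lfPair (i : Fin 3) {U Ut : Fin 8 → ℝ} {p pt σ α : ℝ} (hU : U ∈ admisSet)
    (hUt : Ut ∈ admisSet) (hp : 0 < p) (hpt : 0 < pt) (hσ : alphaSig i U Ut p pt σ < α) :
    LinAdmissible 2 ((BC Ut i - BC U i) / α) (lfPair α i U Ut p pt) := by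
  have hα := pos_of_alphaSig_lt hσ
  obtain ⟨h₁, h₂, h₃⟩ := alphaSig_lt_iff.1 hσ
  have hf := fCoup_nonneg U Ut σ
  have hS := sFast_nonneg p U i
  have hSt := sFast_nonneg pt Ut i
  refine ⟨lfPair_zero_pos hα i hU hUt (by linarith) (by linarith) p pt, fun vs Bs => ?_⟩
  rw [div_mul_eq_mul_div, div_lt_iff₀ hα, ← sub_pos, mul_comm _ α,
    mul_div_cancel_left₀ _ two_ne_zero, lfPair_energy_eq hα.ne' i hU.1.ne' hUt.1.ne']
  have hR := (abs_le.1 (abs_fluxRemainder_le hU hp i vs Bs)).2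
  have hRt := (abs_le.1 (abs_fluxRemainder_le hUt hpt i vs Bs)).1
  have hC := (abs_le.1 (abs_coupling_le hU hUt σ i vs Bs)).2
  simp only [Pi.sub_apply] at hC
  have hkin := kinEnergy_pos hU vs
  have hkint := kinEnergy_pos hUt vs
  have hmag := magEnergy_nonneg U Bs
  have hmagt := magEnergy_nonneg Ut Bs
  set s := σ * velC U i + (1 - σ) * velC Ut i
  set S := max (sFast p U i) (sFast pt Ut i)
  -- the magnetic coefficients are split as `α ∓ v*_i = (α ∓ s) ± (s - v*_i)`, and `hC` absorbs
  -- the second part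
  linarith [mul_pos (by linarith : 0 < α - |velC U i| - sFast p U i - fCoup U Ut σ) hkin,
    mul_pos (by linarith : 0 < α - |velC Ut i| - sFast pt Ut i - fCoup U Ut σ) hkint,
    mul_nonneg (sub_nonneg.2 (le_abs_self (velC U i))) hkin.le,
    mul_nonneg (neg_le_iff_add_nonneg'.1 (neg_abs_le (velC Ut i))) hkint.le,
    mul_nonneg (by linarith : 0 ≤ α - |s| - S - fCoup U Ut σ) hmag,
    mul_nonneg (by linarith : 0 ≤ α - |s| - S - fCoup U Ut σ) hmagt,
    mul_nonneg (sub_nonneg.2 (le_abs_self s)) hmag,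
    mul_nonneg (neg_le_iff_add_nonneg'.1 (neg_abs_le s)) hmagt,
    mul_nonneg (sub_nonneg.2 (le_max_left (sFast p U i) (sFast pt Ut i))) hmag,
    mul_nonneg (sub_nonneg.2 (le_max_right (sFast p U i) (sFast pt Ut i))) hmagt]

/-- 2D generalized Lax–Friedrichs splitting property. -/
theorem gLF_splitting_2D (Q : ℕ) (hQ : 1 ≤ Q)
    (ω : Fin Q → ℝ) (hω : ∀ i, 0 < ω i) (hωsum : ∑ i, ω i = 1)
    (Δx Δy : ℝ) (hΔx : 0 < Δx) (hΔy : 0 < Δy)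
    (Ub Ut Uh Uc : Fin Q → Fin 8 → ℝ)
    (pb pt ph pc : Fin Q → ℝ)
    (hGb : ∀ i, Ub i ∈ admisSet) (hGt : ∀ i, Ut i ∈ admisSet)
    (hGh : ∀ i, Uh i ∈ admisSet) (hGc : ∀ i, Uc i ∈ admisSet)
    (hpb : ∀ i, 0 < pb i) (hpt : ∀ i, 0 < pt i)
    (hph : ∀ i, 0 < ph i) (hpc : ∀ i, 0 < pc i)
    (hDDF : (∑ i, ω i * (Ub i 4 - Ut i 4)) / Δx
          + (∑ i, ω i * (Uh i 5 - Uc i 5)) / Δy = 0)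
    (α₁ α₂ : ℝ)
    (hα₁ : ∀ i, alphaInf 0 (Ub i) (Ut i) (pb i) (pt i) < α₁)
    (hα₂ : ∀ i, alphaInf 1 (Uh i) (Uc i) (ph i) (pc i) < α₂) :
    (2 * (α₁ / Δx + α₂ / Δy))⁻¹ •
      (∑ i, ω i •
        ((α₁ / Δx) • (Ub i - α₁⁻¹ • flux (pb i) 0 (Ub i)
                      + Ut i + α₁⁻¹ • flux (pt i) 0 (Ut i))
         + (α₂ / Δy) • (Uh i - α₂⁻¹ • flux (ph i) 1 (Uh i)
                      + Uc i + α₂⁻¹ • flux (pc i) 1 (Uc i))))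
      ∈ admisSet := by
  have j₀ : Fin Q := ⟨0, hQ⟩
  choose σ₁ hσ₁ using fun j => exists_lt_of_ciInf_lt (hα₁ j)
  choose σ₂ hσ₂ using fun j => exists_lt_of_ciInf_lt (hα₂ j)
  have hα₁pos := pos_of_alphaSig_lt (hσ₁ j₀)
  have hα₂pos := pos_of_alphaSig_lt (hσ₂ j₀)
  set a₁ := α₁ / Δx
  set a₂ := α₂ / Δy
  have ha₁ : 0 < a₁ := div_pos hα₁pos hΔx
  have ha₂ : 0 < a₂ := div_pos hα₂pos hΔy
  have hW := (LinAdmissible.sum ⟨j₀, Finset.mem_univ _⟩ fun j _ =>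
    (((linAdmissible_lfPair 0 (hGb j) (hGt j) (hpb j) (hpt j) (hσ₁ j)).smul ha₁).add
      ((linAdmissible_lfPair 1 (hGh j) (hGc j) (hph j) (hpc j) (hσ₂ j)).smul ha₂)).smul
        (hω j)).smul (inv_pos.2 (by positivity : 0 < 2 * (a₁ + a₂)))
  refine mem_admisSet_iff.2 ?_
  convert hW using 2
  · rw [← Finset.sum_mul, hωsum]
    field_simp
  · have hdefect : ∑ j, ω j * (a₁ * ((BC (Ut j) 0 - BC (Ub j) 0) / α₁)
        + a₂ * ((BC (Uc j) 1 - BC (Uh j) 1) / α₂))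
        = -((∑ j, ω j * (Ub j 4 - Ut j 4)) / Δx + (∑ j, ω j * (Uh j 5 - Uc j 5)) / Δy) := by
      rw [Finset.sum_div, Finset.sum_div, ← Finset.sum_add_distrib, ← Finset.sum_neg_distrib]
      refine Finset.sum_congr rfl fun j _ => ?_
      simp only [BC, a₁, a₂, Matrix.cons_val_zero, Matrix.cons_val_one]
      field_simp
      ring
    rw [hdefect, hDDF, neg_zero, mul_zero]
  · rfl
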